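/- arXiv:math/0303126 — 4 statements merged into one kernel-verified Lean document; each statement's English description precedes it below -/
import Mathlib

section
/- Let H be a separable real Hilbert space with topological dual H', let {v_k}_{k∈ℕ} be an orthonormal basis of H, and let γ : ℕ → [0,∞) and positive constants p, C₂ be such that for every n ∈ ℕ the number of indices k with γ(k) ≤ n is at most C₂(1+n)^p. Set C₄ = C₂ (Σ_{n=1}^∞ (n+1)^{-2})^{1/2}. Let G be a bounded linear operator from H to H' and set a_{k,l} = ⟨G v_k, v_l⟩. If M = sup_{k,l} |a_{k,l}| (2 + max{γ(k), γ(l)})^{p+1} is finite, then the operator norm of G satisfies ‖G‖_{L(H,H')} ≤ C₄ M. -/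
/-!
The operator norm is dominated by the Hilbert–Schmidt norm, `‖G‖² ≤ ∑_{k,l} a_{k,l}²`: by Parseval
`‖G x‖² = ∑_l φ_l(x)²` with `φ_l = ⟨G ·, v_l⟩`, and `‖φ_l‖² = ∑_k a_{k,l}²`. To bound the
double sum, group the pairs `(k, l)` into shells by `n = ⌊max (γ k) (γ l)⌋`. The `n`-th shell lies
in `{γ ≤ n + 1}²`, so it has at most `C₂² (n + 2)^(2p)` elements, each with
`a_{k,l}² ≤ M² (n + 2)^(-2p-2)`; hence `∑ a_{k,l}² ≤ C₂² M² ∑ (n + 2)⁻²`.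
-/

open scoped RealInnerProductSpace
open Finset

section HilbertSchmidt

variable {ι H : Type*} [NormedAddCommGroup H] [InnerProductSpace ℝ H] [CompleteSpace H]

theorem HilbertBasis.hasSum_sq_apply (b : HilbertBasis ι ℝ H) (φ : StrongDual ℝ H) :
    HasSum (fun i => φ (b i) ^ 2) (‖φ‖ ^ 2) := by
  set z := (InnerProductSpace.toDual ℝ H).symm φ
  have hz : ∀ x, ⟪z, x⟫ = φ x := fun x => InnerProductSpace.toDual_symm_apply
  have hparseval := b.hasSum_inner_mul_inner z z
  rw [real_inner_self_eq_norm_sq, LinearIsometryEquiv.norm_map] at hparseval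
  simpa only [real_inner_comm z, hz, sq] using hparseval

theorem HilbertBasis.norm_le_sqrt_of_hasSum_sq_apply (b : HilbertBasis ι ℝ H)
    (G : H →L[ℝ] StrongDual ℝ H) {S : ℝ}
    (hS : HasSum (fun q : ι × ι => G (b q.1) (b q.2) ^ 2) S) : ‖G‖ ≤ √S := by
  set φ : ι → StrongDual ℝ H := fun l => (ContinuousLinearMap.apply ℝ ℝ (b l)).comp G
  have hrows : HasSum (fun l => ‖φ l‖ ^ 2) S :=
    ((Equiv.prodComm ι ι).hasSum_iff.2 hS).prod_fiberwise fun l => b.hasSum_sq_apply (φ l)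
  have hS0 : 0 ≤ S := hrows.nonneg fun _ => sq_nonneg _
  refine G.opNorm_le_bound (Real.sqrt_nonneg S) fun x => ?_
  have hGx : ‖G x‖ ^ 2 ≤ S * ‖x‖ ^ 2 := by
    refine hasSum_le (fun l => ?_) (b.hasSum_sq_apply (G x)) (hrows.mul_right (‖x‖ ^ 2))
    rw [← mul_pow, ← sq_abs]
    exact pow_le_pow_left₀ (abs_nonneg _) ((φ l).le_opNorm x) 2
  rw [← Real.sqrt_sq (norm_nonneg x), ← Real.sqrt_mul hS0]
  exact (Real.le_sqrt (norm_nonneg _) (by positivity)).2 hGx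

end HilbertSchmidt

theorem Finset.sum_le_tsum_of_fiber_ncard_le {α : Type*} (g : α → ℕ) {f : α → ℝ} {c d : ℕ → ℝ}
    (hfd : ∀ q, f q ≤ d (g q)) (hd : ∀ n, 0 ≤ d n)
    (hfin : ∀ n, (g ⁻¹' {n}).Finite) (hcard : ∀ n, ((g ⁻¹' {n}).ncard : ℝ) ≤ c n)
    (hcd : Summable fun n => c n * d n) (s : Finset α) :
    ∑ q ∈ s, f q ≤ ∑' n, c n * d n := by
  classical
  rw [← sum_fiberwise_of_maps_to fun q hq => mem_image_of_mem g hq]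
  refine (sum_le_sum fun n _ => ?_).trans <| hcd.sum_le_tsum _ fun n _ =>
    mul_nonneg ((Nat.cast_nonneg _).trans (hcard n)) (hd n)
  have hfiber : ((#{q ∈ s | g q = n} : ℕ) : ℝ) ≤ c n := by
    have hsub : Set.ncard (↑{q ∈ s | g q = n} : Set α) ≤ (g ⁻¹' {n}).ncard :=
      Set.ncard_le_ncard (fun q hq => (mem_filter.1 hq).2) (hfin n)
    rw [Set.ncard_coe_finset] at hsub
    exact le_trans (by exact_mod_cast hsub) (hcard n)
  calc ∑ q ∈ s with g q = n, f q ≤ #{q ∈ s | g q = n} • d n :=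
        sum_le_card_nsmul _ _ _ fun q hq => (mem_filter.1 hq).2 ▸ hfd q
    _ ≤ c n * d n := by
      rw [nsmul_eq_mul]
      exact mul_le_mul_of_nonneg_right hfiber (hd n)

theorem preimage_floor_max_subset {α : Type*} (γ : α → ℝ) (n : ℕ) :
    (fun q : α × α => ⌊max (γ q.1) (γ q.2)⌋₊) ⁻¹' {n} ⊆
      {k | γ k ≤ (n + 1 : ℕ)} ×ˢ {k | γ k ≤ (n + 1 : ℕ)} := by
  intro q hq
  have hlt : max (γ q.1) (γ q.2) < (n + 1 : ℕ) := by
    have := Nat.lt_floor_add_one (max (γ q.1) (γ q.2))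
    rwa [show ⌊max (γ q.1) (γ q.2)⌋₊ = n from hq, ← Nat.cast_succ] at this
  exact ⟨(le_max_left _ _).trans hlt.le, (le_max_right _ _).trans hlt.le⟩

theorem sq_le_sq_div_floor_add_two_rpow {x t r M : ℝ} (ht : 0 ≤ t) (hr : 0 ≤ r)
    (h : |x| * (2 + t) ^ r ≤ M) : x ^ 2 ≤ (M / ((⌊t⌋₊ : ℝ) + 2) ^ r) ^ 2 := by
  have hpos : 0 < ((⌊t⌋₊ : ℝ) + 2) ^ r := by positivity
  have hx : |x| ≤ M / ((⌊t⌋₊ : ℝ) + 2) ^ r := by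
    rw [le_div_iff₀ hpos]
    refine le_trans (mul_le_mul_of_nonneg_left ?_ (abs_nonneg x)) h
    exact Real.rpow_le_rpow (by positivity) (by linarith [Nat.floor_le ht]) hr
  rw [← sq_abs]
  exact pow_le_pow_left₀ (abs_nonneg x) hx 2

theorem summable_inv_nat_add_two_sq : Summable fun n : ℕ => (((n : ℝ) + 2) ^ 2)⁻¹ := by
  have := (summable_nat_add_iff 2).2 (Real.summable_nat_pow_inv.2 one_lt_two)
  exact this.congr fun n => by push_cast; ring_nf

theorem stmt4_general {H : Type*} [NormedAddCommGroup H] [InnerProductSpace ℝ H] [CompleteSpace H]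
    (v : HilbertBasis ℕ ℝ H)
    (γ : ℕ → ℝ) (hγ : ∀ k, 0 ≤ γ k)
    (p C₂ : ℝ) (hp : 0 < p) (hC₂ : 0 < C₂)
    (hcount : ∀ n : ℕ, {k : ℕ | γ k ≤ (n : ℝ)}.Finite ∧
      (({k : ℕ | γ k ≤ (n : ℝ)}.ncard : ℝ) ≤ C₂ * (1 + (n : ℝ)) ^ p))
    (G : H →L[ℝ] StrongDual ℝ H) (M : ℝ)
    (hM : ∀ k l : ℕ, |(G (v k)) (v l)| * (2 + max (γ k) (γ l)) ^ (p + 1) ≤ M) :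
    ‖G‖ ≤ (C₂ * Real.sqrt (∑' n : ℕ, (((n : ℝ) + 2) ^ 2)⁻¹)) * M := by
  set T := ∑' n : ℕ, (((n : ℝ) + 2) ^ 2)⁻¹
  set g : ℕ × ℕ → ℕ := fun q => ⌊max (γ q.1) (γ q.2)⌋₊
  have hM0 : 0 ≤ M := le_trans (mul_nonneg (abs_nonneg _)
    (Real.rpow_nonneg (by linarith [hγ 0, le_max_left (γ 0) (γ 0)]) _)) (hM 0 0)
  have hentry : ∀ q, G (v q.1) (v q.2) ^ 2 ≤ (M / ((g q : ℝ) + 2) ^ (p + 1)) ^ 2 := fun q =>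
    sq_le_sq_div_floor_add_two_rpow ((hγ _).trans (le_max_left _ _)) (by linarith) (hM q.1 q.2)
  have hfiber : ∀ n : ℕ, (g ⁻¹' {n}).Finite ∧
      ((g ⁻¹' {n}).ncard : ℝ) ≤ (C₂ * ((n : ℝ) + 2) ^ p) ^ 2 := by
    intro n
    obtain ⟨hfin, hcard⟩ := hcount (n + 1)
    have hsub := preimage_floor_max_subset γ n
    refine ⟨(hfin.prod hfin).subset hsub, ?_⟩
    have hle := Set.ncard_le_ncard hsub (hfin.prod hfin)
    rw [Set.ncard_prod] at hle
    calc ((g ⁻¹' {n}).ncard : ℝ) ≤ ({k | γ k ≤ ((n + 1 : ℕ) : ℝ)}.ncard : ℝ) ^ 2 := by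
          rw [sq]; exact_mod_cast hle
      _ ≤ (C₂ * ((n : ℝ) + 2) ^ p) ^ 2 := by
          rw [show (1 + ((n + 1 : ℕ) : ℝ)) = (n : ℝ) + 2 by push_cast; ring] at hcard
          gcongr
  have hcd : ∀ n : ℕ, (C₂ * ((n : ℝ) + 2) ^ p) ^ 2 * (M / ((n : ℝ) + 2) ^ (p + 1)) ^ 2 =
      (C₂ * M) ^ 2 * (((n : ℝ) + 2) ^ 2)⁻¹ := by
    intro n
    have hn : (0 : ℝ) < (n : ℝ) + 2 := by positivity
    rw [Real.rpow_add_one hn.ne']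
    field_simp
  have hpartial : ∀ s : Finset (ℕ × ℕ), ∑ q ∈ s, G (v q.1) (v q.2) ^ 2 ≤ (C₂ * M) ^ 2 * T := by
    intro s
    rw [← tsum_mul_left, ← tsum_congr hcd]
    exact Finset.sum_le_tsum_of_fiber_ncard_le g hentry (fun _ => sq_nonneg _)
      (fun n => (hfiber n).1) (fun n => (hfiber n).2)
      ((summable_inv_nat_add_two_sq.mul_left _).congr fun n => (hcd n).symm) s
  have hsum := summable_of_sum_le (fun _ => sq_nonneg _) hpartial
  calc ‖G‖ ≤ √(∑' q : ℕ × ℕ, G (v q.1) (v q.2) ^ 2) :=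
        v.norm_le_sqrt_of_hasSum_sq_apply G hsum.hasSum
    _ ≤ √((C₂ * M) ^ 2 * T) := Real.sqrt_le_sqrt (hsum.tsum_le_of_sum_le hpartial)
    _ = C₂ * √T * M := by
        rw [Real.sqrt_mul (sq_nonneg _), Real.sqrt_sq (by positivity)]
        ring

/-- Let `H` be a separable real Hilbert space with dual `H'`, `(v_k)` an
orthonormal basis of `H`, and `γ : ℕ → [0,∞)` with `#{k : γ(k) ≤ n} ≤ C₂(1+n)^p` for all
`n ∈ ℕ` (`p, C₂ > 0`). Set `C₄ = C₂ (Σ_{n=1}^∞ (n+1)^{-2})^{1/2}`. If `G : H → H'` is a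
bounded linear operator, `a_{k,l} = ⟨G v_k, v_l⟩`, and
`M ≥ |a_{k,l}| (2 + max{γ(k),γ(l)})^(p+1)` for all `k, l` (i.e. the supremum `M` of these
quantities is finite), then `‖G‖ ≤ C₄ M`. -/
theorem stmt4 {H : Type*} [NormedAddCommGroup H] [InnerProductSpace ℝ H] [CompleteSpace H]
    [TopologicalSpace.SeparableSpace H]
    (v : HilbertBasis ℕ ℝ H)
    (γ : ℕ → ℝ) (hγ : ∀ k, 0 ≤ γ k)
    (p C₂ : ℝ) (hp : 0 < p) (hC₂ : 0 < C₂)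
    (hcount : ∀ n : ℕ, {k : ℕ | γ k ≤ (n : ℝ)}.Finite ∧
      (({k : ℕ | γ k ≤ (n : ℝ)}.ncard : ℝ) ≤ C₂ * (1 + (n : ℝ)) ^ p))
    (G : H →L[ℝ] StrongDual ℝ H) (M : ℝ)
    (hM : ∀ k l : ℕ, |(G (v k)) (v l)| * (2 + max (γ k) (γ l)) ^ (p + 1) ≤ M) :
    ‖G‖ ≤ (C₂ * Real.sqrt (∑' n : ℕ, (((n : ℝ) + 2) ^ 2)⁻¹)) * M :=
  stmt4_general v γ hγ p C₂ hp hC₂ hcount G M hM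
end

section
/- Fix integers N ≥ 2 and m ≥ 1 and positive constants β and r, and fix x ∈ ℝ^N. Let B'_{N-1}(x,r) = {y ∈ B_N(x,r) : y_N = x_N}, and for a real function f on the closure of B'_{N-1}(x,r) let graph(f) = {y ∈ ℝ^N : y_N = f(y₁,…,y_{N-1},x_N), (y₁,…,y_{N-1},x_N) ∈ closure of B'_{N-1}(x,r)}. For ε > 0 let X_{mβε}(B'_{N-1}(x,r)) be the set of graphs of functions f of class C^m compactly supported in B'_{N-1}(x,r) with ‖f‖_{C^m} ≤ β and x_N ≤ f ≤ x_N + ε, regarded as a metric space with the Hausdorff distance. Then there exists ε₀ > 0, depending on N, m, β and r only, such that for every ε with 0 < ε < ε₀ there exists a subset Z_ε of X_{mβε}(B'_{N-1}(x,r)) that is ε-discrete with respect to the Hausdorff distance and has at least exp(2^{-N} ε₀^{(N-1)/m} ε^{-(N-1)/m}) elements. -/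
/-!
Fix a scale `δ ≈ ε^{1/m}` and a grid of `≈ δ^{-(N-1)}` points `p_k` of mesh `5δ` inside
`B'_{N-1}(x,r)`, and put at each `p_k` a bump of height `ε` and radius `2δ`; rescaling a fixed
bump shows that its `C^m` norm is `≲ ε δ^{-m}`, which the choice of `δ` makes `≤ β`. Since the
bumps have disjoint supports, the sum of the bumps at any set `A` of grid points lies in
`X_{mβε}`, and if `p_k ∈ A \ B` then the peak `(p_k, x_N + ε)` of the graph for `A` is at
distance `≥ ε` from the graph for `B`, which is flat on `B(p_k, ε)`. The `2^{#grid}` subsets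
of the grid thus give `exp(c ε^{-(N-1)/m})` graphs that are `ε`-apart.
-/

open Metric Set Function Filter

section Graph

variable {E : Type*} [PseudoMetricSpace E]

def graphL2 (f : E → ℝ) (K : Set E) : Set (WithLp 2 (E × ℝ)) :=
  (fun z => WithLp.toLp 2 (z, f z)) '' K

lemma isCompact_graphL2 {f : E → ℝ} {K : Set E} (hK : IsCompact K) (hf : ContinuousOn f K) :
    IsCompact (graphL2 f K) :=
  hK.image_of_continuousOn <| (WithLp.prod_continuous_toLp 2 E ℝ).comp_continuousOn
    (continuousOn_id.prodMk hf)

lemma le_dist_of_mem_graphL2 {f g : E → ℝ} {K : Set E} {p : E} {ε : ℝ}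
    (hfg : ∀ z ∈ ball p ε, ε ≤ |f p - g z|) {q : WithLp 2 (E × ℝ)} (hq : q ∈ graphL2 g K) :
    ε ≤ dist (WithLp.toLp 2 (p, f p)) q := by
  obtain ⟨z, -, rfl⟩ := hq
  by_cases hz : z ∈ ball p ε
  · have h := WithLp.dist_snd_le (WithLp.toLp 2 (p, f p)) (WithLp.toLp 2 (z, g z))
    rw [Real.dist_eq] at h
    exact (hfg z hz).trans h
  · rw [mem_ball, not_lt, dist_comm] at hz
    exact hz.trans (WithLp.dist_fst_le (WithLp.toLp 2 (p, f p)) (WithLp.toLp 2 (z, g z)))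

lemma le_hausdorffDist_graphL2 {f g : E → ℝ} {K : Set E} (hK : IsCompact K)
    (hf : ContinuousOn f K) (hg : ContinuousOn g K) {p : E} (hp : p ∈ K) {ε : ℝ}
    (hfg : ∀ z ∈ ball p ε, ε ≤ |f p - g z|) :
    ε ≤ hausdorffDist (graphL2 f K) (graphL2 g K) := by
  have hne : ∀ {h : E → ℝ}, (graphL2 h K).Nonempty := ⟨_, mem_image_of_mem _ hp⟩
  refine ((le_infDist hne).2 fun q hq => le_dist_of_mem_graphL2 hfg hq).trans
    (infDist_le_hausdorffDist_of_mem (mem_image_of_mem _ hp) ?_)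
  exact hausdorffEDist_ne_top_of_nonempty_of_bounded hne hne
    (isCompact_graphL2 hK hf).isBounded (isCompact_graphL2 hK hg).isBounded

variable {ι : Type*} {b : ι → E → ℝ} {ε c : ℝ} {K : Set E}

lemma le_hausdorffDist_graphL2_sum (hK : IsCompact K) (hb : ∀ k, Continuous (b k)) {p : ι → E}
    (hp : ∀ k, p k ∈ K) (hpeak : ∀ k, b k (p k) = ε)
    (hfar : ∀ k j, j ≠ k → ∀ z ∈ ball (p k) ε, b j z = 0) (hε : 0 < ε)
    {A B : Finset ι} {k : ι} (hkA : k ∈ A) (hkB : k ∉ B) :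
    ε ≤ hausdorffDist (graphL2 (fun z => c + ∑ j ∈ A, b j z) K)
      (graphL2 (fun z => c + ∑ j ∈ B, b j z) K) := by
  have hcont : ∀ A : Finset ι, ContinuousOn (fun z => c + ∑ j ∈ A, b j z) K := fun A =>
    (continuous_const.add (continuous_finsetSum A fun j _ => hb j)).continuousOn
  refine le_hausdorffDist_graphL2 hK (hcont A) (hcont B) (hp k) fun z hz => ?_
  have hA : ∑ j ∈ A, b j (p k) = ε := by
    rw [Finset.sum_eq_single_of_mem k hkA fun j _ hjk => hfar k j hjk _ (mem_ball_self hε)]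
    exact hpeak k
  have hB : ∑ j ∈ B, b j z = 0 :=
    Finset.sum_eq_zero fun j hj => hfar k j (ne_of_mem_of_not_mem hj hkB) z hz
  simp only [hA, hB, add_zero, add_sub_cancel_left, abs_of_pos hε, le_refl]

end Graph

lemma norm_sum_le_of_pairwise_disjoint_support {ι X F : Type*} [SeminormedAddCommGroup F]
    {g : ι → X → F} (hg : Pairwise (Disjoint on fun k => support (g k))) {C : ℝ} (hC : 0 ≤ C)
    (hgC : ∀ k z, ‖g k z‖ ≤ C) (s : Finset ι) (z : X) : ‖∑ k ∈ s, g k z‖ ≤ C := by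
  by_cases h : ∃ k ∈ s, g k z ≠ 0
  · obtain ⟨k, hk, hz⟩ := h
    rw [Finset.sum_eq_single_of_mem k hk fun j _ hjk =>
      notMem_support.1 fun hj => disjoint_left.1 (hg hjk) hj hz]
    exact hgC k z
  · rw [Finset.sum_eq_zero fun k hk => not_not.1 fun hz => h ⟨k, hk, hz⟩, norm_zero]
    exact hC

section BumpSums

variable {E : Type*} [NormedAddCommGroup E] [NormedSpace ℝ E]

/-- The space `X_{mβε}(B'_{N-1}(x,r))` of the paper is the case `U = B'_{N-1}(x,r)`,
`K = closure U` and `c = x_N`. -/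
def smoothGraphs (m : ℕ) (β ε c : ℝ) (U K : Set E) : Set (Set (WithLp 2 (E × ℝ))) :=
  {S | ∃ f : E → ℝ, ContDiff ℝ m f ∧ tsupport (fun z => f z - c) ⊆ U ∧
    (∀ i ≤ m, ∀ z, ‖iteratedFDeriv ℝ i (fun z => f z - c) z‖ ≤ β) ∧
    (∀ z, c ≤ f z ∧ f z ≤ c + ε) ∧ S = graphL2 f K}

variable {ι : Type*} {b : ι → E → ℝ} {m : ℕ} {β ε c : ℝ} {U K : Set E}

lemma graphL2_sum_mem_smoothGraphs (hb : ∀ k, ContDiff ℝ m (b k))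
    (hdisj : Pairwise (Disjoint on fun k => tsupport (b k))) (hU : ∀ k, tsupport (b k) ⊆ U)
    (hε : 0 ≤ ε) (hb0 : ∀ k z, 0 ≤ b k z) (hbε : ∀ k z, b k z ≤ ε) (hβ : 0 ≤ β)
    (hderiv : ∀ k, ∀ i ≤ m, ∀ z, ‖iteratedFDeriv ℝ i (b k) z‖ ≤ β) (A : Finset ι) :
    graphL2 (fun z => c + ∑ k ∈ A, b k z) K ∈ smoothGraphs m β ε c U K := by
  have hsub : (fun z => c + ∑ k ∈ A, b k z - c) = fun z => ∑ k ∈ A, b k z := by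
    simp only [add_sub_cancel_left]
  have hsum_le : ∀ z, ∑ k ∈ A, b k z ≤ ε := fun z =>
    (le_abs_self _).trans <| norm_sum_le_of_pairwise_disjoint_support
      (fun j k hjk => (hdisj hjk).mono (subset_tsupport _) (subset_tsupport _)) hε
      (fun k z => by rw [Real.norm_of_nonneg (hb0 k z)]; exact hbε k z) A z
  refine ⟨_, contDiff_const.add (ContDiff.sum fun k _ => hb k), ?_, ?_, fun z => ?_, rfl⟩
  · rw [hsub]
    refine (closure_mono (Finset.support_sum A b)).trans ?_
    rw [Finset.closure_biUnion]
    exact iUnion₂_subset fun k _ => hU k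
  · intro i hi z
    rw [hsub, iteratedFDeriv_fun_sum_apply fun k _ =>
      ((hb k).of_le (by exact_mod_cast hi)).contDiffAt]
    exact norm_sum_le_of_pairwise_disjoint_support (fun j k hjk => (hdisj hjk).mono
      (support_iteratedFDeriv_subset i) (support_iteratedFDeriv_subset i)) hβ
      (fun k z => hderiv k i hi z) A z
  · exact ⟨by linarith [Finset.sum_nonneg fun k (_ : k ∈ A) => hb0 k z], by linarith [hsum_le z]⟩

lemma exists_separated_smoothGraphs_of_bumps [Fintype ι] (hK : IsCompact K)
    (hb : ∀ k, ContDiff ℝ m (b k)) (hdisj : Pairwise (Disjoint on fun k => tsupport (b k)))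
    (hU : ∀ k, tsupport (b k) ⊆ U) (hε : 0 < ε) (hb0 : ∀ k z, 0 ≤ b k z)
    (hbε : ∀ k z, b k z ≤ ε) (hβ : 0 ≤ β)
    (hderiv : ∀ k, ∀ i ≤ m, ∀ z, ‖iteratedFDeriv ℝ i (b k) z‖ ≤ β) {p : ι → E}
    (hp : ∀ k, p k ∈ K) (hpeak : ∀ k, b k (p k) = ε)
    (hfar : ∀ k j, j ≠ k → ∀ z ∈ ball (p k) ε, b j z = 0) :
    ∃ Z : Finset (Set (WithLp 2 (E × ℝ))), ↑Z ⊆ smoothGraphs m β ε c U K ∧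
      (∀ S ∈ Z, ∀ T ∈ Z, S ≠ T → ε ≤ hausdorffDist S T) ∧ Z.card = 2 ^ Fintype.card ι := by
  classical
  set G : Finset ι → Set (WithLp 2 (E × ℝ)) := fun A => graphL2 (fun z => c + ∑ k ∈ A, b k z) K
  have hsep : ∀ A B, A ≠ B → ε ≤ hausdorffDist (G A) (G B) := by
    intro A B hAB
    have hcont := fun k => (hb k).continuous
    by_cases hAB' : A ⊆ B
    · obtain ⟨k, hkB, hkA⟩ := Finset.not_subset.1 fun h => hAB (hAB'.antisymm h)
      rw [hausdorffDist_comm]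
      exact le_hausdorffDist_graphL2_sum hK hcont hp hpeak hfar hε hkB hkA
    · obtain ⟨k, hkA, hkB⟩ := Finset.not_subset.1 hAB'
      exact le_hausdorffDist_graphL2_sum hK hcont hp hpeak hfar hε hkA hkB
  have hinj : Injective G := fun A B hAB => by
    by_contra hne
    have := hsep A B hne
    rw [hAB, hausdorffDist_self_zero] at this
    exact this.not_gt hε
  refine ⟨Finset.univ.image G, ?_, ?_, ?_⟩
  · intro S hS
    obtain ⟨A, -, rfl⟩ := Finset.mem_image.1 hS
    exact graphL2_sum_mem_smoothGraphs hb hdisj hU hε.le hb0 hbε hβ hderiv A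
  · simp only [Finset.mem_image, Finset.mem_univ, true_and]
    rintro _ ⟨A, rfl⟩ _ ⟨B, rfl⟩ hne
    exact hsep A B (ne_of_apply_ne G hne)
  · rw [Finset.card_image_of_injective _ hinj, Finset.card_univ, Fintype.card_finset]

end BumpSums

lemma ContDiff.eventually_norm_iteratedFDeriv_le {E F : Type*} [NormedAddCommGroup E]
    [NormedSpace ℝ E] [NormedAddCommGroup F] [NormedSpace ℝ F] {f : E → F} {m : ℕ}
    (hf : ContDiff ℝ m f) (hsupp : HasCompactSupport f) :
    ∀ᶠ C in atTop, ∀ i ≤ m, ∀ z, ‖iteratedFDeriv ℝ i f z‖ ≤ C := by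
  have h : ∀ i ∈ Iic m, ∀ᶠ C in atTop, ∀ z, ‖iteratedFDeriv ℝ i f z‖ ≤ C := fun i hi => by
    obtain ⟨C, hC⟩ := (hsupp.iteratedFDeriv i).exists_bound_of_continuous
      (hf.continuous_iteratedFDeriv (by exact_mod_cast hi))
    exact (eventually_ge_atTop C).mono fun C' hC' z => (hC z).trans hC'
  exact ((eventually_all_finite (finite_Iic m)).2 h).mono fun C hC i hi => hC i hi

section ScaledBumps

variable (E : Type*) [NormedAddCommGroup E] [NormedSpace ℝ E]

def unitBump : ContDiffBump (0 : E) := ⟨1, 2, one_pos, one_lt_two⟩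

variable {E}

def scaledBump (c : E) {δ : ℝ} (hδ : 0 < δ) : ContDiffBump c := ⟨δ, 2 * δ, hδ, by linarith⟩

variable [HasContDiffBump E]

lemma scaledBump_apply (c : E) {δ : ℝ} (hδ : 0 < δ) (x : E) :
    scaledBump c hδ x = unitBump E (δ⁻¹ • (x - c)) := by
  simp only [ContDiffBump.apply, scaledBump, unitBump, mul_div_cancel_right₀ _ hδ.ne',
    inv_one, one_smul, sub_zero, div_one]

lemma norm_iteratedFDeriv_scaledBump_le (c : E) {δ : ℝ} (hδ : 0 < δ) {i : ℕ} {C : ℝ}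
    (hC : ∀ z, ‖iteratedFDeriv ℝ i (unitBump E) z‖ ≤ C) (z : E) :
    ‖iteratedFDeriv ℝ i (scaledBump c hδ) z‖ ≤ δ⁻¹ ^ i * C := by
  rw [funext (scaledBump_apply c hδ), iteratedFDeriv_comp_sub (f := fun w => unitBump E (δ⁻¹ • w)),
    iteratedFDeriv_comp_const_smul _ (unitBump E).contDiff, norm_smul, norm_pow,
    Real.norm_of_nonneg (inv_nonneg.2 hδ.le)]
  gcongr
  exact hC _

lemma norm_iteratedFDeriv_const_mul_scaledBump_le (c : E) {δ ε β C : ℝ} (hδ : 0 < δ)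
    (hδ1 : δ ≤ 1) (hε : 0 ≤ ε) {i m : ℕ} (hi : i ≤ m)
    (hC : ∀ z, ‖iteratedFDeriv ℝ i (unitBump E) z‖ ≤ C) (hCε : C * ε ≤ β * δ ^ m) (z : E) :
    ‖iteratedFDeriv ℝ i (fun x => ε * scaledBump c hδ x) z‖ ≤ β := by
  have hC0 : 0 ≤ C := (norm_nonneg _).trans (hC 0)
  rw [show (fun x => ε * scaledBump c hδ x) = fun x => ε • scaledBump c hδ x from rfl,
    iteratedFDeriv_const_smul_apply' (scaledBump c hδ).contDiffAt, norm_smul,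
    Real.norm_of_nonneg hε]
  calc ε * ‖iteratedFDeriv ℝ i (scaledBump c hδ) z‖ ≤ ε * (δ⁻¹ ^ i * C) := by
        gcongr
        exact norm_iteratedFDeriv_scaledBump_le c hδ hC z
    _ ≤ ε * (δ⁻¹ ^ m * C) := by
        gcongr
        exact (one_le_inv₀ hδ).2 hδ1
    _ = C * ε / δ ^ m := by rw [inv_pow]; ring
    _ ≤ β := by rwa [div_le_iff₀ (pow_pos hδ m)]

end ScaledBumps

lemma exists_grid (d : ℕ) {s L : ℝ} (hs : 0 < s) (hsL : s ≤ L) (x : EuclideanSpace ℝ (Fin d)) :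
    ∃ M : ℕ, L / s ≤ M ∧ ∃ p : (Fin d → Fin M) → EuclideanSpace ℝ (Fin d),
      Pairwise (fun k j => s ≤ dist (p k) (p j)) ∧ ∀ k, dist (p k) x ≤ 2 * d * L := by
  set M := ⌈L / s⌉₊
  have hM : (M : ℝ) * s ≤ 2 * L := by
    have h1 : 1 ≤ L / s := (one_le_div hs).2 hsL
    have h2 := Nat.ceil_lt_add_one (zero_le_one.trans h1)
    rw [← le_div_iff₀ hs, mul_div_assoc]
    linarith
  set v : (Fin d → Fin M) → EuclideanSpace ℝ (Fin d) := fun k => WithLp.toLp 2 fun i => (k i : ℝ)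
  refine ⟨M, Nat.le_ceil _, fun k => x + s • v k, fun k j hkj => ?_, fun k => ?_⟩
  · obtain ⟨i, hi⟩ := Function.ne_iff.1 hkj
    have hij : (1 : ℤ) ≤ |(k i : ℤ) - (j i : ℤ)| :=
      Int.one_le_abs (sub_ne_zero.2 (by exact_mod_cast Fin.val_ne_of_ne hi))
    have h1 : 1 ≤ dist (v k) (v j) := by
      refine le_trans ?_ (PiLp.dist_apply_le _ _ i)
      show (1 : ℝ) ≤ |((k i : ℕ) : ℝ) - (j i : ℕ)|
      exact_mod_cast hij
    rw [dist_add_left, dist_smul₀, Real.norm_of_nonneg hs.le]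
    nlinarith
  · have hv : ‖v k‖ ≤ d * M := by
      rw [EuclideanSpace.norm_eq, Real.sqrt_le_iff]
      refine ⟨by positivity, ?_⟩
      calc ∑ i, ‖v k i‖ ^ 2 ≤ ∑ _i : Fin d, (M : ℝ) ^ 2 := Finset.sum_le_sum fun i _ => by
            gcongr
            rw [show v k i = ((k i : ℕ) : ℝ) from rfl, Real.norm_natCast]
            exact_mod_cast (k i).2.le
        _ = d * M ^ 2 := by simp
        _ ≤ (d * M) ^ 2 := by
            rw [mul_pow]
            gcongr
            exact_mod_cast Nat.le_self_pow two_ne_zero d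
    rw [dist_self_add_left, norm_smul, Real.norm_of_nonneg hs.le]
    nlinarith [norm_nonneg (v k), (d.cast_nonneg : (0 : ℝ) ≤ d)]

lemma exp_pow_div_two_le_two_pow {x : ℝ} {M : ℕ} (hx : 0 ≤ x) (hxM : x ≤ M) (d : ℕ) :
    Real.exp (x ^ d / 2) ≤ 2 ^ (M ^ d) := by
  have hpow : x ^ d ≤ (M : ℝ) ^ d := pow_le_pow_left₀ hx hxM d
  calc Real.exp (x ^ d / 2) ≤ Real.exp ((M ^ d : ℕ) * Real.log 2) := by
        gcongr
        push_cast
        nlinarith [Real.log_two_gt_d9, pow_nonneg hx d]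
    _ = 2 ^ (M ^ d) := by rw [Real.exp_nat_mul, Real.exp_log two_pos]

theorem exists_separated_smoothGraphs_of_scale {d m : ℕ} {β r ε δ L C : ℝ}
    (x' : EuclideanSpace ℝ (Fin d)) (c : ℝ) (hε : 0 < ε) (hεδ : ε ≤ δ) (hδL : δ ≤ L)
    (hδ1 : δ ≤ 1) (hLr : L ≤ r / (10 * d + 3)) (hβ : 0 ≤ β)
    (hC : ∀ i ≤ m, ∀ z, ‖iteratedFDeriv ℝ i (unitBump (EuclideanSpace ℝ (Fin d))) z‖ ≤ C)
    (hCε : C * ε ≤ β * δ ^ m) :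
    ∃ Z : Finset (Set (WithLp 2 (EuclideanSpace ℝ (Fin d) × ℝ))),
      ↑Z ⊆ smoothGraphs m β ε c (ball x' r) (closedBall x' r) ∧
      (∀ S ∈ Z, ∀ T ∈ Z, S ≠ T → ε ≤ hausdorffDist S T) ∧
      Real.exp ((L / δ) ^ d / 2) ≤ Z.card := by
  have hδ : 0 < δ := hε.trans_le hεδ
  rw [le_div_iff₀ (by positivity)] at hLr
  obtain ⟨M, hM, p, hsep, hpx⟩ :=
    exists_grid d (by positivity : 0 < 5 * δ) (by linarith : 5 * δ ≤ 5 * L) x'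
  rw [mul_div_mul_left _ _ (by norm_num : (5 : ℝ) ≠ 0)] at hM
  set b : (Fin d → Fin M) → EuclideanSpace ℝ (Fin d) → ℝ :=
    fun k z => ε * scaledBump (p k) hδ z
  have htsupp : ∀ k, tsupport (b k) ⊆ closedBall (p k) (2 * δ) := fun k =>
    tsupport_mul_subset_right.trans (scaledBump (p k) hδ).tsupport_eq.subset
  obtain ⟨Z, hZ, hZsep, hcard⟩ := exists_separated_smoothGraphs_of_bumps (c := c)
    (isCompact_closedBall x' r) (fun k => contDiff_const.mul (scaledBump (p k) hδ).contDiff)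
    (fun k j hkj => (closedBall_disjoint_closedBall (by linarith [hsep hkj])).mono
      (htsupp k) (htsupp j))
    (fun k => (htsupp k).trans (closedBall_subset_ball' (y := x') (ε₂ := r)
      (by linarith [hpx k])))
    hε (fun k z => mul_nonneg hε.le (scaledBump (p k) hδ).nonneg)
    (fun k z => mul_le_of_le_one_right hε.le (scaledBump (p k) hδ).le_one) hβ
    (fun k i hi =>
      norm_iteratedFDeriv_const_mul_scaledBump_le (p k) hδ hδ1 hε.le hi (hC i hi) hCε)
    (fun k => mem_closedBall.2 (by linarith [hpx k]))
    (fun k => by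
      rw [(scaledBump (p k) hδ).one_of_mem_closedBall (mem_closedBall_self hδ.le), mul_one])
    (fun k j hjk z hz => by
      rw [(scaledBump (p j) hδ).zero_of_le_dist, mul_zero]
      rw [mem_ball] at hz
      show 2 * δ ≤ dist z (p j)
      rw [dist_comm]
      linarith [hsep hjk, dist_triangle (p j) z (p k)])
  refine ⟨Z, hZ, hZsep, ?_⟩
  rw [hcard, Fintype.card_fun, Fintype.card_fin, Fintype.card_fin, Nat.cast_pow, Nat.cast_ofNat]
  exact exp_pow_div_two_le_two_pow (div_nonneg (hδ.le.trans hδL) hδ.le) hM d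

theorem exists_separated_smoothGraphs (d : ℕ) {m : ℕ} (hm : m ≠ 0) {β r : ℝ} (hβ : 0 < β)
    (hr : 0 < r) (x' : EuclideanSpace ℝ (Fin d)) (c : ℝ) :
    ∃ ε₀ > 0, ∀ ε, 0 < ε → ε < ε₀ →
      ∃ Z : Finset (Set (WithLp 2 (EuclideanSpace ℝ (Fin d) × ℝ))),
        ↑Z ⊆ smoothGraphs m β ε c (ball x' r) (closedBall x' r) ∧
        (∀ S ∈ Z, ∀ T ∈ Z, S ≠ T → ε ≤ hausdorffDist S T) ∧
        Real.exp (((ε₀ / ε) ^ (m⁻¹ : ℝ)) ^ d / 2) ≤ Z.card := by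
  obtain ⟨C, hC, hβC⟩ := (((unitBump _).contDiff.eventually_norm_iteratedFDeriv_le
    (unitBump (EuclideanSpace ℝ (Fin d))).hasCompactSupport).and (eventually_ge_atTop β)).exists
  have hC0 : 0 < C := hβ.trans_le hβC
  set ρ := min 1 (r / (10 * d + 3))
  have hρ : 0 < ρ := lt_min one_pos (by positivity)
  refine ⟨β * ρ ^ m / C, by positivity, fun ε hε hεε₀ => ?_⟩
  -- the bump radius `δ = ρ / t` is the solution of `C ε = β δ^m`
  set t := (β * ρ ^ m / C / ε) ^ (m⁻¹ : ℝ)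
  have ht : 1 ≤ t := Real.one_le_rpow ((one_le_div hε).2 hεε₀.le) (by positivity)
  have hδ1 : ρ / t ≤ 1 := (div_le_self hρ.le ht).trans (min_le_left _ _)
  have hδm : C * ε = β * (ρ / t) ^ m := by
    rw [div_pow, Real.rpow_inv_natCast_pow (by positivity) hm]
    field_simp
  have hεδ : ε ≤ ρ / t := (le_of_mul_le_mul_left (by rw [← hδm]; gcongr) hβ).trans
    (pow_le_of_le_one (by positivity) hδ1 hm)
  obtain ⟨Z, hZ, hsep, hcard⟩ := exists_separated_smoothGraphs_of_scale x' c hε hεδ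
    (div_le_self hρ.le ht) hδ1 (min_le_right _ _) hβ.le hC hδm.le
  rw [div_div_cancel₀ hρ.ne'] at hcard
  exact ⟨Z, hZ, hsep, hcard⟩

lemma rpow_div_mul_rpow_neg_div (a b : ℝ) (ha : 0 ≤ a) (hb : 0 ≤ b) (d m : ℕ) :
    a ^ ((d : ℝ) / m) * b ^ (-((d : ℝ) / m)) = ((a / b) ^ (m⁻¹ : ℝ)) ^ d := by
  rw [Real.rpow_neg hb, ← div_eq_mul_inv, ← Real.div_rpow ha hb, ← Real.rpow_natCast,
    ← Real.rpow_mul (div_nonneg ha hb), inv_mul_eq_div]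

/-- Fix integers `N ≥ 2`, `m ≥ 1` and `β, r > 0`, and a point
`x = (x', x_N) ∈ ℝ^N ≅ ℝ^{N-1} × ℝ` (Euclidean, i.e. `ℓ²`, product norm). Consider the
space `X_{mβε}(B'_{N-1}(x,r))` of graphs over the closure of `B'_{N-1}(x,r)` of `C^m`
functions `f` with `f − x_N` compactly supported in `B'_{N-1}(x,r)`, `C^m` norm of the
perturbation `f − x_N` at most `β`, and `x_N ≤ f ≤ x_N + ε`, endowed with the Hausdorff
distance. Then there is `ε₀ > 0`, depending on `N`, `m`, `β`, `r` only, such that every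
`0 < ε < ε₀` admits an `ε`-discrete subset `Z_ε` of this space with at least
`exp(2^{-N} ε₀^{(N-1)/m} ε^{-(N-1)/m})` elements. -/
theorem stmt6 (N m : ℕ) (hN : 2 ≤ N) (hm : 1 ≤ m) (β r : ℝ) (hβ : 0 < β) (hr : 0 < r)
    (x' : EuclideanSpace ℝ (Fin (N - 1))) (xN : ℝ) :
    ∃ ε₀ : ℝ, 0 < ε₀ ∧ ∀ ε : ℝ, 0 < ε → ε < ε₀ →
      ∃ Z : Finset (Set (WithLp 2 (EuclideanSpace ℝ (Fin (N - 1)) × ℝ))),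
        (∀ S ∈ Z, ∃ f : EuclideanSpace ℝ (Fin (N - 1)) → ℝ,
          ContDiff ℝ m f ∧
          tsupport (fun z => f z - xN) ⊆ Metric.ball x' r ∧
          (∀ i ≤ m, ∀ z, ‖iteratedFDeriv ℝ i (fun z => f z - xN) z‖ ≤ β) ∧
          (∀ z, xN ≤ f z ∧ f z ≤ xN + ε) ∧
          S = (fun z => (WithLp.equiv 2 (EuclideanSpace ℝ (Fin (N - 1)) × ℝ)).symm (z, f z)) ''
                Metric.closedBall x' r) ∧
        (∀ S ∈ Z, ∀ T ∈ Z, S ≠ T → ε ≤ Metric.hausdorffDist S T) ∧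
        Real.exp (2 ^ (-(N : ℝ)) * ε₀ ^ (((N : ℝ) - 1) / m) * ε ^ (-(((N : ℝ) - 1) / m)))
          ≤ (Z.card : ℝ) := by
  have hNd : (N : ℝ) - 1 = (N - 1 : ℕ) := by rw [Nat.cast_sub (by omega), Nat.cast_one]
  obtain ⟨ε₀, hε₀, h⟩ := exists_separated_smoothGraphs (N - 1) (by omega : m ≠ 0) hβ hr x' xN
  refine ⟨ε₀, hε₀, fun ε hε hεε₀ => ?_⟩
  obtain ⟨Z, hZ, hsep, hcard⟩ := h ε hε hεε₀
  refine ⟨Z, fun S hS => hZ hS, hsep, le_trans ?_ hcard⟩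
  rw [hNd, mul_assoc, rpow_div_mul_rpow_neg_div _ _ hε₀.le hε.le, div_eq_inv_mul _ (2 : ℝ)]
  gcongr
  rw [← Real.rpow_neg_one]
  exact Real.rpow_le_rpow_of_exponent_le one_le_two (by linarith)
end

section
/- Fix integers N ≥ 2 and m ≥ 1 and a positive constant β. Then there exists ε₀ > 0, depending on N, m and β only, such that for every ε with 0 < ε < ε₀ there exists a family of functions f : ℝ^{N-1} → ℝ, each of class C^m, supported in the open ball B_{N-1}(0,1/2), satisfying ‖f‖_{C^m} ≤ β and 0 ≤ f ≤ ε, which is ε-discrete with respect to the supremum norm (any two distinct members differ by at least ε in sup norm) and has at least exp(2^{-N} ε₀^{(N-1)/m} ε^{-(N-1)/m}) elements. -/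
/-!
Put a cubical grid of spacing `3r` in the ball of radius `3/8`; it has about `r^{-(N-1)}` points.
For every subset `S` of the grid let `f_S` be `ε` times the sum of copies of a fixed bump, rescaled
to radius `r` and centred at the points of `S`. The supports are disjoint, so `0 ≤ f_S ≤ ε`, two
different `f_S` differ by `ε` at some grid point, and the `i`-th derivative of `f_S` is at most
`ε C r^{-i}`. Taking `r^m` proportional to `ε / β` keeps the `C^m` norm below `β`, and the
`2^{#grid}` subsets give `exp(c ε^{-(N-1)/m})` functions.
-/

open Metric Set Function Filter

theorem Finset.norm_sum_apply_le_of_pairwise_disjoint_support {ι α M : Type*}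
    [SeminormedAddCommGroup M] {f : ι → α → M}
    (hf : Pairwise (Disjoint on fun i => support (f i))) (S : Finset ι) (x : α) {B : ℝ}
    (hB : 0 ≤ B) (hfB : ∀ i, ‖f i x‖ ≤ B) : ‖∑ i ∈ S, f i x‖ ≤ B := by
  by_cases h : ∃ i ∈ S, f i x ≠ 0
  · obtain ⟨i, hi, hfi⟩ := h
    rw [Finset.sum_eq_single_of_mem i hi fun j _ hji => ?_]
    · exact hfB i
    · by_contra hfj
      exact Set.disjoint_left.1 (hf hji) hfj hfi
  · rw [Finset.sum_eq_zero fun i hi => not_not.1 fun hfi => h ⟨i, hi, hfi⟩, norm_zero]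
    exact hB

theorem norm_iteratedFDeriv_comp_smul_sub_le {𝕜 E F : Type*} [NontriviallyNormedField 𝕜]
    [NormedAddCommGroup E] [NormedSpace 𝕜 E] [NormedAddCommGroup F] [NormedSpace 𝕜 F]
    {f : E → F} {n : WithTop ℕ∞} (hf : ContDiff 𝕜 n f) {i : ℕ} (hi : i ≤ n) (c : 𝕜) (p x : E) :
    ‖iteratedFDeriv 𝕜 i (fun z => f (c • (z - p))) x‖ ≤
      ‖c‖ ^ i * ‖iteratedFDeriv 𝕜 i f (c • (x - p))‖ := by
  set L : E →L[𝕜] E := c • ContinuousLinearMap.id 𝕜 E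
  have hL : ‖L‖ ≤ ‖c‖ :=
    (ContinuousLinearMap.opNorm_smul_le _ _).trans
      (mul_le_of_le_one_right (norm_nonneg c) ContinuousLinearMap.norm_id_le)
  change ‖iteratedFDeriv 𝕜 i (fun z => (f ∘ L) (z - p)) x‖ ≤ _
  rw [iteratedFDeriv_comp_sub, L.iteratedFDeriv_comp_right hf _ hi]
  calc _ ≤ ‖iteratedFDeriv 𝕜 i f (L (x - p))‖ * ∏ _j : Fin i, ‖L‖ :=
        ContinuousMultilinearMap.norm_compContinuousLinearMap_le _ _
    _ ≤ ‖c‖ ^ i * ‖iteratedFDeriv 𝕜 i f (c • (x - p))‖ := by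
        rw [Finset.prod_const, Finset.card_univ, Fintype.card_fin, mul_comm]
        gcongr
        rfl

theorem exists_bound_iteratedFDeriv_of_hasCompactSupport {𝕜 E F : Type*}
    [NontriviallyNormedField 𝕜] [NormedAddCommGroup E] [NormedSpace 𝕜 E] [NormedAddCommGroup F]
    [NormedSpace 𝕜 F] {f : E → F} {n : WithTop ℕ∞} (hc : HasCompactSupport f)
    (hf : ContDiff 𝕜 n f) {m : ℕ} (hm : m ≤ n) :
    ∃ C, ∀ i ≤ m, ∀ x, ‖iteratedFDeriv 𝕜 i f x‖ ≤ C := by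
  have hbound : ∀ i ∈ Iic m, ∀ᶠ C in atTop, ∀ x, ‖iteratedFDeriv 𝕜 i f x‖ ≤ C := fun i hi => by
    obtain ⟨C, hC⟩ := (hf.continuous_iteratedFDeriv ((Nat.cast_le.2 hi).trans hm)
      ).bounded_above_of_compact_support (hc.iteratedFDeriv i)
    exact eventually_atTop.2 ⟨C, fun C' hC' x => (hC x).trans hC'⟩
  exact ((eventually_all_finite (finite_Iic m)).2 hbound).exists

theorem support_comp_smul_sub_subset_ball {E M : Type*} [NormedAddCommGroup E]
    [NormedSpace ℝ E] [Zero M] {ψ : E → M} (hψ : support ψ ⊆ ball 0 1) {r : ℝ} (hr : 0 < r)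
    (p : E) : support (fun z => ψ (r⁻¹ • (z - p))) ⊆ ball p r := by
  intro z hz
  have := hψ hz
  rwa [mem_ball_zero_iff, norm_smul, norm_inv, Real.norm_of_nonneg hr.le, inv_mul_lt_iff₀ hr,
    mul_one, ← mem_ball_iff_norm] at this

section bumpSum

variable {E ι : Type*} [NormedAddCommGroup E] [NormedSpace ℝ E]

noncomputable def bumpSum (ψ : E → ℝ) (r : ℝ) (p : ι → E) (S : Finset ι) (z : E) : ℝ :=
  ∑ v ∈ S, ψ (r⁻¹ • (z - p v))

variable {ψ : E → ℝ} {r : ℝ} {p : ι → E}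

theorem pairwise_disjoint_tsupport_comp_smul_sub (hψ : support ψ ⊆ ball 0 1) (hr : 0 < r)
    (hp : Pairwise fun v w => 2 * r < dist (p v) (p w)) :
    Pairwise (Disjoint on fun v => tsupport fun z => ψ (r⁻¹ • (z - p v))) := by
  have hsub : ∀ v, tsupport (fun z => ψ (r⁻¹ • (z - p v))) ⊆ closedBall (p v) r := fun v =>
    closure_minimal ((support_comp_smul_sub_subset_ball hψ hr (p v)).trans ball_subset_closedBall)
      isClosed_closedBall
  exact fun v w hvw =>
    (closedBall_disjoint_closedBall (by linarith [hp hvw])).mono (hsub v) (hsub w)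

theorem bumpSum_apply_self (hψ : support ψ ⊆ ball 0 1) (hr : 0 < r)
    (hp : Pairwise fun v w => 2 * r < dist (p v) (p w)) [DecidableEq ι] (S : Finset ι) (v : ι) :
    bumpSum ψ r p S (p v) = if v ∈ S then ψ 0 else 0 := by
  have hterm : ∀ w, ψ (r⁻¹ • (p v - p w)) = if v = w then ψ 0 else 0 := by
    intro w
    split_ifs with hvw
    · rw [hvw, sub_self, smul_zero]
    · refine notMem_support.1 fun h => ?_
      have := support_comp_smul_sub_subset_ball hψ hr (p w) h
      rw [mem_ball] at this
      linarith [hp hvw, dist_nonneg (x := p v) (y := p w)]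
  simp only [bumpSum, hterm, Finset.sum_ite_eq]

theorem bumpSum_mem_Icc (hψ : support ψ ⊆ ball 0 1) (hψ01 : ∀ x, ψ x ∈ Icc 0 1) (hr : 0 < r)
    (hp : Pairwise fun v w => 2 * r < dist (p v) (p w)) (S : Finset ι) (z : E) :
    bumpSum ψ r p S z ∈ Icc 0 1 := by
  have hdisj := pairwise_disjoint_tsupport_comp_smul_sub hψ hr hp
  have hle := Finset.norm_sum_apply_le_of_pairwise_disjoint_support
    (fun v w hvw => (hdisj hvw).mono (subset_tsupport _) (subset_tsupport _)) S z zero_le_one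
    fun v => by rw [Real.norm_of_nonneg (hψ01 _).1]; exact (hψ01 _).2
  exact ⟨Finset.sum_nonneg fun v _ => (hψ01 _).1, (le_abs_self _).trans hle⟩

theorem support_bumpSum_subset (hψ : support ψ ⊆ ball 0 1) (hr : 0 < r) (S : Finset ι) :
    support (bumpSum ψ r p S) ⊆ ⋃ v ∈ S, ball (p v) r :=
  (Finset.support_sum S _).trans
    (iUnion₂_mono fun v _ => support_comp_smul_sub_subset_ball hψ hr (p v))

theorem contDiff_bumpSum {n : WithTop ℕ∞} (hψ : ContDiff ℝ n ψ) (r : ℝ) (p : ι → E)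
    (S : Finset ι) : ContDiff ℝ n (bumpSum ψ r p S) :=
  ContDiff.sum fun _ _ => hψ.comp ((contDiff_id.sub contDiff_const).const_smul _)

theorem norm_iteratedFDeriv_bumpSum_le {n : WithTop ℕ∞} (hψ : ContDiff ℝ n ψ)
    (hψ1 : support ψ ⊆ ball 0 1) (hr : 0 < r) (hp : Pairwise fun v w => 2 * r < dist (p v) (p w))
    {i : ℕ} (hi : i ≤ n) {C : ℝ} (hC : ∀ x, ‖iteratedFDeriv ℝ i ψ x‖ ≤ C) (S : Finset ι) (z : E) :
    ‖iteratedFDeriv ℝ i (bumpSum ψ r p S) z‖ ≤ r⁻¹ ^ i * C := by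
  have hdisj := pairwise_disjoint_tsupport_comp_smul_sub hψ1 hr hp
  unfold bumpSum
  rw [iteratedFDeriv_fun_sum_apply (f := fun v z => ψ (r⁻¹ • (z - p v))) fun v _ =>
    (hψ.comp ((contDiff_id.sub contDiff_const).const_smul _)).contDiffAt.of_le hi]
  refine Finset.norm_sum_apply_le_of_pairwise_disjoint_support
    (fun v w hvw =>
      (hdisj hvw).mono (support_iteratedFDeriv_subset i) (support_iteratedFDeriv_subset i))
    S z (by have := (norm_nonneg _).trans (hC 0); positivity) fun v => ?_
  calc _ ≤ ‖r⁻¹‖ ^ i * ‖iteratedFDeriv ℝ i ψ (r⁻¹ • (z - p v))‖ :=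
        norm_iteratedFDeriv_comp_smul_sub_le hψ hi _ _ _
    _ ≤ r⁻¹ ^ i * C := by
        rw [Real.norm_of_nonneg (inv_nonneg.2 hr.le)]
        gcongr
        exact hC _

theorem exists_abs_bumpSum_sub_eq (hψ : support ψ ⊆ ball 0 1) (hr : 0 < r)
    (hp : Pairwise fun v w => 2 * r < dist (p v) (p w)) {S T : Finset ι} (hST : S ≠ T) :
    ∃ z, |bumpSum ψ r p S z - bumpSum ψ r p T z| = |ψ 0| := by
  classical
  obtain ⟨v, hv⟩ : ∃ v, ¬(v ∈ S ↔ v ∈ T) := not_forall.1 fun h => hST (Finset.ext h)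
  refine ⟨p v, ?_⟩
  rw [bumpSum_apply_self hψ hr hp, bumpSum_apply_self hψ hr hp]
  by_cases hvS : v ∈ S <;> by_cases hvT : v ∈ T <;> simp_all

end bumpSum

def IsDiscreteBumpFamily {E : Type*} [NormedAddCommGroup E] [NormedSpace ℝ E]
    (Z : Finset (E → ℝ)) (m : ℕ) (B : ℕ → ℝ) (R ε : ℝ) : Prop :=
  (∀ f ∈ Z, ContDiff ℝ m f ∧ support f ⊆ ball 0 R ∧
      (∀ i ≤ m, ∀ z, ‖iteratedFDeriv ℝ i f z‖ ≤ B i) ∧ ∀ z, 0 ≤ f z ∧ f z ≤ ε) ∧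
    ∀ f ∈ Z, ∀ g ∈ Z, f ≠ g → ε ≤ ⨆ z, |f z - g z|

theorem IsDiscreteBumpFamily.mono_bound {E : Type*} [NormedAddCommGroup E] [NormedSpace ℝ E]
    {Z : Finset (E → ℝ)} {m : ℕ} {B B' : ℕ → ℝ} {R ε : ℝ} (h : IsDiscreteBumpFamily Z m B R ε)
    (hB : ∀ i ≤ m, B i ≤ B' i) : IsDiscreteBumpFamily Z m B' R ε :=
  ⟨fun f hf => let ⟨h₁, h₂, h₃, h₄⟩ := h.1 f hf
    ⟨h₁, h₂, fun i hi z => (h₃ i hi z).trans (hB i hi), h₄⟩, h.2⟩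

section family

variable {E ι : Type*} [NormedAddCommGroup E] [NormedSpace ℝ E] [HasContDiffBump E]
  {r : ℝ} {p : ι → E}

theorem exists_isDiscreteBumpFamily_bumpSum [Fintype ι] (ψ : ContDiffBump (0 : E))
    (hψ : ψ.rOut = 1) {m : ℕ} {C : ℝ} (hC : ∀ i ≤ m, ∀ x, ‖iteratedFDeriv ℝ i ψ x‖ ≤ C)
    (hr : 0 < r) (hp : Pairwise fun v w => 2 * r < dist (p v) (p w)) {R : ℝ}
    (hpR : ∀ v, ‖p v‖ + r ≤ R) {ε : ℝ} (hε : 0 < ε) :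
    ∃ Z : Finset (E → ℝ), Z.card = 2 ^ Fintype.card ι ∧
      IsDiscreteBumpFamily Z m (fun i => ε * (r⁻¹ ^ i * C)) R ε := by
  classical
  have hsupp : support ψ ⊆ ball 0 1 := by rw [ψ.support_eq, hψ]
  have h01 : ∀ x, ψ x ∈ Icc 0 1 := fun x => ⟨ψ.nonneg, ψ.le_one⟩
  have h0 : ψ 0 = 1 := ψ.one_of_mem_closedBall (mem_closedBall_self ψ.rIn_pos.le)
  set F : Finset ι → E → ℝ := fun S => ε • bumpSum ψ r p S
  have hF_mem : ∀ S z, F S z ∈ Icc 0 ε := fun S z => by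
    obtain ⟨h0, h1⟩ := bumpSum_mem_Icc hsupp h01 hr hp S z
    exact ⟨mul_nonneg hε.le h0, mul_le_of_le_one_right hε.le h1⟩
  have hF_sep : ∀ S T, S ≠ T → ∃ z, |F S z - F T z| = ε := fun S T hST => by
    obtain ⟨z, hz⟩ := exists_abs_bumpSum_sub_eq hsupp hr hp hST
    refine ⟨z, ?_⟩
    simp only [F, Pi.smul_apply, smul_eq_mul, ← mul_sub, abs_mul, hz, h0, abs_one,
      abs_of_pos hε, mul_one]
  have hF_inj : Injective F := fun S T h => by
    by_contra hST
    obtain ⟨z, hz⟩ := hF_sep S T hST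
    rw [h, sub_self, abs_zero] at hz
    exact hε.ne hz
  refine ⟨Finset.univ.map ⟨F, hF_inj⟩, by simp [Fintype.card_finset], ?_, ?_⟩
  · simp only [Finset.mem_map, Finset.mem_univ, true_and, Embedding.coeFn_mk]
    rintro _ ⟨S, rfl⟩
    refine ⟨(contDiff_bumpSum ψ.contDiff r p S).const_smul ε, ?_, fun i hi z => ?_,
      fun z => hF_mem S z⟩
    · refine (support_const_smul_subset ε _).trans ((support_bumpSum_subset hsupp hr S).trans ?_)
      exact iUnion₂_subset fun v _ =>
        ball_subset_ball' (by rw [dist_zero_right, add_comm]; exact hpR v)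
    · rw [iteratedFDeriv_const_smul_apply ((contDiff_bumpSum ψ.contDiff r p S).contDiffAt),
        norm_smul, Real.norm_of_nonneg hε.le]
      exact mul_le_mul_of_nonneg_left (norm_iteratedFDeriv_bumpSum_le ψ.contDiff hsupp hr hp
        (mod_cast le_top) (hC i hi) S z) hε.le
  · simp only [Finset.mem_map, Finset.mem_univ, true_and, Embedding.coeFn_mk]
    rintro _ ⟨S, rfl⟩ _ ⟨T, rfl⟩ hST
    obtain ⟨z, hz⟩ := hF_sep S T fun h => hST (h ▸ rfl)
    refine hz.symm.le.trans (le_ciSup (f := fun y => |F S y - F T y|) ⟨ε, ?_⟩ z)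
    rintro _ ⟨y, rfl⟩
    exact abs_sub_le_of_nonneg_of_le (hF_mem S y).1 (hF_mem S y).2 (hF_mem T y).1 (hF_mem T y).2

end family

noncomputable def gridPoint {n K : ℕ} (δ : ℝ) (v : Fin n → Fin K) : EuclideanSpace ℝ (Fin n) :=
  WithLp.toLp 2 fun i => δ * (v i : ℕ)

theorem norm_gridPoint_le {n K : ℕ} {δ : ℝ} (hδ : 0 ≤ δ) (v : Fin n → Fin K) :
    ‖gridPoint δ v‖ ≤ √n * (δ * K) := by
  have hcoord : ∀ i, ‖gridPoint δ v i‖ ^ 2 ≤ (δ * K) ^ 2 := fun i => by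
    have : ((v i : ℕ) : ℝ) ≤ K := by exact_mod_cast (v i).2.le
    simp only [gridPoint, Real.norm_eq_abs, sq_abs]
    gcongr
  calc ‖gridPoint δ v‖ = √(∑ i, ‖gridPoint δ v i‖ ^ 2) := EuclideanSpace.norm_eq _
    _ ≤ √(n * (δ * K) ^ 2) :=
        Real.sqrt_le_sqrt (by simpa using Finset.sum_le_sum (s := Finset.univ) fun i _ => hcoord i)
    _ = √n * (δ * K) := by rw [Real.sqrt_mul (Nat.cast_nonneg _), Real.sqrt_sq (by positivity)]

theorem le_dist_gridPoint {n K : ℕ} {δ : ℝ} (hδ : 0 ≤ δ) {v w : Fin n → Fin K} (hvw : v ≠ w) :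
    δ ≤ dist (gridPoint δ v) (gridPoint δ w) := by
  obtain ⟨i, hi⟩ := Function.ne_iff.1 hvw
  have h1 : (1 : ℝ) ≤ |((v i : ℕ) : ℝ) - (w i : ℕ)| := by
    have := Int.one_le_abs (sub_ne_zero.2 (Int.natCast_inj.not.2 (Fin.val_ne_of_ne hi)))
    exact_mod_cast this
  calc δ ≤ δ * |((v i : ℕ) : ℝ) - (w i : ℕ)| := le_mul_of_one_le_right hδ h1
    _ = dist (gridPoint δ v i) (gridPoint δ w i) := by
        simp [gridPoint, Real.dist_eq, ← mul_sub, abs_mul, abs_of_nonneg hδ]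
    _ ≤ _ := PiLp.dist_apply_le _ _ _

theorem exists_isDiscreteBumpFamily_grid {n : ℕ} (hn : 0 < n)
    (ψ : ContDiffBump (0 : EuclideanSpace ℝ (Fin n))) (hψ : ψ.rOut = 1) {m : ℕ} {C : ℝ}
    (hC : ∀ i ≤ m, ∀ x, ‖iteratedFDeriv ℝ i ψ x‖ ≤ C) {t : ℝ} (ht0 : 0 < t) (ht1 : t ≤ 1)
    {ε : ℝ} (hε : 0 < ε) :
    ∃ Z : Finset (EuclideanSpace ℝ (Fin n) → ℝ),
      IsDiscreteBumpFamily Z m (fun i => ε * ((16 * √n / t) ^ i * C)) (1 / 2) ε ∧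
        Real.exp (t⁻¹ ^ n / 2) ≤ Z.card := by
  have hs : 1 ≤ √n := Real.one_le_sqrt.2 (by exact_mod_cast hn)
  set r := t / (16 * √n) with hr_def
  have hr : 0 < r := by positivity
  set K := ⌊2 / t⌋₊
  have hKt : K * t ≤ 2 := (le_div_iff₀ ht0).1 (Nat.floor_le (by positivity))
  have hK : t⁻¹ ≤ K := by
    have h2 : 2 / t - 1 < K := Nat.sub_one_lt_floor _
    have h1 : 1 ≤ t⁻¹ := one_le_inv₀ ht0 |>.2 ht1
    rw [div_eq_mul_inv] at h2
    linarith
  have hgrid : ∀ v : Fin n → Fin K, ‖gridPoint (3 * r) v‖ + r ≤ 1 / 2 := fun v => by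
    have h1 := norm_gridPoint_le (by positivity : 0 ≤ 3 * r) v
    have h2 : √n * (3 * r * K) = 3 / 16 * (K * t) := by rw [hr_def]; field_simp
    have h3 : r ≤ 1 / 16 := by
      rw [hr_def, div_le_iff₀ (by positivity)]
      nlinarith
    nlinarith
  obtain ⟨Z, hcard, hZ⟩ := exists_isDiscreteBumpFamily_bumpSum ψ hψ hC hr
    (fun v w hvw => by linarith [le_dist_gridPoint (by positivity : 0 ≤ 3 * r) hvw]) hgrid hε
  refine ⟨Z, by simpa only [hr_def, inv_div] using hZ, ?_⟩
  calc Real.exp (t⁻¹ ^ n / 2) ≤ Real.exp ((K ^ n : ℕ) * Real.log 2) := by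
        gcongr
        have := Real.log_two_gt_d9
        push_cast
        nlinarith [pow_le_pow_left₀ (by positivity) hK n, pow_nonneg (inv_nonneg.2 ht0.le) n]
    _ = Z.card := by
        rw [Real.exp_nat_mul, Real.exp_log two_pos, hcard, Fintype.card_fun, Fintype.card_fin,
          Fintype.card_fin]
        push_cast
        rfl

theorem exists_isDiscreteBumpFamily {n : ℕ} (hn : 0 < n) {m : ℕ} (hm : 1 ≤ m) {β : ℝ}
    (hβ : 0 < β) :
    ∃ ε₀ > 0, ∀ ε, 0 < ε → ε < ε₀ → ∃ Z : Finset (EuclideanSpace ℝ (Fin n) → ℝ),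
      IsDiscreteBumpFamily Z m (fun _ => β) (1 / 2) ε ∧
        Real.exp ((ε₀ / ε) ^ ((n : ℝ) / m) / 2) ≤ Z.card := by
  let ψ : ContDiffBump (0 : EuclideanSpace ℝ (Fin n)) := ⟨1 / 2, 1, by norm_num, by norm_num⟩
  obtain ⟨C, hC⟩ := exists_bound_iteratedFDeriv_of_hasCompactSupport ψ.hasCompactSupport
    (ψ.contDiff (n := ⊤)) (m := m) (mod_cast le_top)
  have hC1 : 1 ≤ C := by
    simpa [ψ.one_of_mem_closedBall (mem_closedBall_self ψ.rIn_pos.le)] using hC 0 m.zero_le 0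
  set c := 16 * √n
  have hc : 1 ≤ c := by
    have : 1 ≤ √n := Real.one_le_sqrt.2 (by exact_mod_cast hn)
    linarith
  -- `ε₀` is chosen so that the scale `t = (ε / ε₀)^(1/m)` turns `ε C (c / t)^m` into `β`.
  refine ⟨β / (C * c ^ m), by positivity, fun ε hε hεε₀ => ?_⟩
  set ε₀ := β / (C * c ^ m)
  set t := (ε / ε₀) ^ ((m : ℝ)⁻¹)
  have ht0 : 0 < t := by positivity
  have ht1 : t ≤ 1 :=
    Real.rpow_le_one (by positivity) ((div_le_one (hε.trans hεε₀)).2 hεε₀.le) (by positivity)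
  have htm : t ^ m = ε / ε₀ := Real.rpow_inv_natCast_pow (by positivity) (by omega)
  have htn : t⁻¹ ^ n = (ε₀ / ε) ^ ((n : ℝ) / m) := by
    rw [← Real.inv_rpow (by positivity), inv_div, ← Real.rpow_natCast, ← Real.rpow_mul
      (by positivity), inv_mul_eq_div]
  obtain ⟨Z, hZ, hcard⟩ := exists_isDiscreteBumpFamily_grid hn ψ rfl hC ht0 ht1 hε
  refine ⟨Z, hZ.mono_bound fun i hi => ?_, htn ▸ hcard⟩
  calc ε * ((c / t) ^ i * C) ≤ ε * ((c / t) ^ m * C) := by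
        gcongr
        exact (one_le_div ht0).2 (ht1.trans hc)
    _ = β := by
        rw [div_pow, htm, show ε₀ = β / (C * c ^ m) from rfl]
        field_simp

/-- Fix integers `N ≥ 2`, `m ≥ 1` and `β > 0`. Then there is `ε₀ > 0`,
depending on `N`, `m`, `β` only, such that for every `0 < ε < ε₀` there is a family of
`C^m` functions `f : ℝ^{N-1} → ℝ` supported in the open ball `B_{N-1}(0,1/2)`, with
`‖f‖_{C^m} ≤ β` and `0 ≤ f ≤ ε`, which is `ε`-discrete in the sup norm and has at least
`exp(2^{-N} ε₀^{(N-1)/m} ε^{-(N-1)/m})` elements. -/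
theorem stmt8 (N m : ℕ) (hN : 2 ≤ N) (hm : 1 ≤ m) (β : ℝ) (hβ : 0 < β) :
    ∃ ε₀ : ℝ, 0 < ε₀ ∧ ∀ ε : ℝ, 0 < ε → ε < ε₀ →
      ∃ Z : Finset (EuclideanSpace ℝ (Fin (N - 1)) → ℝ),
        (∀ f ∈ Z, ContDiff ℝ m f ∧
          Function.support f ⊆ Metric.ball (0 : EuclideanSpace ℝ (Fin (N - 1))) (1 / 2) ∧
          (∀ i ≤ m, ∀ z, ‖iteratedFDeriv ℝ i f z‖ ≤ β) ∧
          (∀ z, 0 ≤ f z ∧ f z ≤ ε)) ∧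
        (∀ f ∈ Z, ∀ g ∈ Z, f ≠ g → ε ≤ ⨆ z, |f z - g z|) ∧
        Real.exp (2 ^ (-(N : ℝ)) * ε₀ ^ (((N : ℝ) - 1) / m) * ε ^ (-(((N : ℝ) - 1) / m)))
          ≤ (Z.card : ℝ) := by
  obtain ⟨ε₀, hε₀, H⟩ := exists_isDiscreteBumpFamily (n := N - 1) (by omega) hm hβ
  refine ⟨ε₀, hε₀, fun ε hε hεε₀ => ?_⟩
  obtain ⟨Z, hZ, hcard⟩ := H ε hε hεε₀
  refine ⟨Z, hZ.1, hZ.2, le_trans (Real.exp_le_exp.2 ?_) hcard⟩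
  rw [Nat.cast_sub (by omega : 1 ≤ N), Nat.cast_one, Real.div_rpow hε₀.le hε.le,
    Real.rpow_neg hε.le, mul_assoc, ← div_eq_mul_inv, div_eq_inv_mul _ 2]
  have h2N : (2 : ℝ) ^ (-(N : ℝ)) ≤ 2⁻¹ := by
    rw [Real.rpow_neg zero_le_two]
    exact inv_anti₀ two_pos
      (Real.self_le_rpow_of_one_le one_le_two (by exact_mod_cast (by omega : 1 ≤ N)))
  gcongr
end

section
/- Let N ≥ 2 be an integer, K ⊆ ℝ^{N-1} a nonempty compact set, and β > 0. Let f, g : K → ℝ be functions satisfying |f(x) − f(y)| ≤ β‖x − y‖ and |g(x) − g(y)| ≤ β‖x − y‖ for all x, y ∈ K. Let Γ_f = {(x, f(x)) : x ∈ K} and Γ_g = {(x, g(x)) : x ∈ K} be their graphs, regarded as compact subsets of ℝ^N. Then the Hausdorff distance d_H(Γ_f, Γ_g) satisfies (sup_{x∈K} |f(x) − g(x)|)/√(1+β²) ≤ d_H(Γ_f, Γ_g) ≤ sup_{x∈K} |f(x) − g(x)|. -/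
/-!
Pairing `(x, f x)` with `(x, g x)` gives the upper bound. For the lower bound, if `g` is
`β`-Lipschitz then for every `y ∈ K`
`|f x - g x| ≤ |f x - g y| + β ‖x - y‖ ≤ √(1 + β²) ‖(x, f x) - (y, g y)‖`
by Cauchy–Schwarz in `ℝ²`, so `|f x - g x| / √(1 + β²)` bounds the distance from `(x, f x)`
to the graph of `g`, hence the Hausdorff distance.
-/

open Metric Set

lemma mul_add_mul_le_sqrt_mul_sqrt (a b r s : ℝ) :
    a * r + b * s ≤ √(a ^ 2 + b ^ 2) * √(r ^ 2 + s ^ 2) := by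
  rw [← Real.sqrt_mul (by positivity)]
  exact (le_abs_self _).trans (Real.abs_le_sqrt (by nlinarith [sq_nonneg (a * s - b * r)]))

lemma hausdorffDist_image_le_of_dist_le {α γ : Type*} [PseudoMetricSpace γ] {φ ψ : α → γ}
    {K : Set α} {r : ℝ} (hr : 0 ≤ r) (h : ∀ x ∈ K, dist (φ x) (ψ x) ≤ r) :
    hausdorffDist (φ '' K) (ψ '' K) ≤ r := by
  refine hausdorffDist_le_of_mem_dist hr ?_ ?_
  · rintro _ ⟨x, hx, rfl⟩
    exact ⟨ψ x, mem_image_of_mem ψ hx, h x hx⟩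
  · rintro _ ⟨x, hx, rfl⟩
    exact ⟨φ x, mem_image_of_mem φ hx, dist_comm (φ x) (ψ x) ▸ h x hx⟩

lemma continuousOn_of_dist_le_mul {α γ : Type*} [PseudoMetricSpace α] [PseudoMetricSpace γ]
    {f : α → γ} {s : Set α} {β : ℝ} (hf : ∀ x ∈ s, ∀ y ∈ s, dist (f x) (f y) ≤ β * dist x y) :
    ContinuousOn f s :=
  (LipschitzOnWith.of_dist_le_mul fun x hx y hy =>
    (hf x hx y hy).trans (by gcongr; exact Real.le_coe_toNNReal β)).continuousOn

section l2Graph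

variable {E : Type*} [PseudoMetricSpace E] {K : Set E} {f g : E → ℝ} {β : ℝ}

def l2Graph (f : E → ℝ) (x : E) : WithLp 2 (E × ℝ) := WithLp.toLp 2 (x, f x)

lemma dist_l2Graph (f g : E → ℝ) (x y : E) :
    dist (l2Graph f x) (l2Graph g y) = √(dist x y ^ 2 + dist (f x) (g y) ^ 2) := by
  rw [WithLp.prod_dist_eq_add (by norm_num), ENNReal.toReal_ofNat, Real.rpow_two, Real.rpow_two,
    Real.sqrt_eq_rpow]
  rfl

lemma dist_l2Graph_self (f g : E → ℝ) (x : E) :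
    dist (l2Graph f x) (l2Graph g x) = |f x - g x| := by
  rw [dist_l2Graph, dist_self, zero_pow two_ne_zero, zero_add, Real.dist_eq,
    Real.sqrt_sq (abs_nonneg _)]

lemma IsCompact.image_l2Graph (hK : IsCompact K) (hf : ContinuousOn f K) :
    IsCompact (l2Graph f '' K) :=
  hK.image_of_continuousOn
    ((WithLp.prod_continuous_toLp 2 E ℝ).comp_continuousOn (continuousOn_id.prodMk hf))

lemma abs_sub_le_mul_infDist_l2Graph
    (hg : ∀ x ∈ K, ∀ y ∈ K, dist (g x) (g y) ≤ β * dist x y) {x : E} (hx : x ∈ K) :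
    |f x - g x| ≤ √(1 + β ^ 2) * infDist (l2Graph f x) (l2Graph g '' K) := by
  rw [← div_le_iff₀' (by positivity), le_infDist (nonempty_of_mem (mem_image_of_mem (l2Graph g) hx))]
  rintro _ ⟨y, hy, rfl⟩
  rw [div_le_iff₀' (by positivity), dist_l2Graph]
  have hgy : dist (g y) (g x) ≤ β * dist x y := dist_comm x y ▸ hg y hy x hx
  calc |f x - g x| = dist (f x) (g x) := (Real.dist_eq _ _).symm
    _ ≤ β * dist x y + 1 * dist (f x) (g y) := by
      linarith [dist_triangle (f x) (g y) (g x)]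
    _ ≤ √(β ^ 2 + 1 ^ 2) * √(dist x y ^ 2 + dist (f x) (g y) ^ 2) :=
      mul_add_mul_le_sqrt_mul_sqrt _ _ _ _
    _ = √(1 + β ^ 2) * √(dist x y ^ 2 + dist (f x) (g y) ^ 2) := by
      rw [one_pow, add_comm (β ^ 2)]

lemma hausdorffDist_l2Graph_le_iSup (hK : IsCompact K) (hf : ContinuousOn f K)
    (hg : ContinuousOn g K) :
    hausdorffDist (l2Graph f '' K) (l2Graph g '' K) ≤ ⨆ z : K, |f z - g z| := by
  have hbdd : BddAbove (range fun z : K => |f z - g z|) := by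
    rw [← image_eq_range (fun x => |f x - g x|)]
    exact (hK.image_of_continuousOn (hf.sub hg).abs).bddAbove
  exact hausdorffDist_image_le_of_dist_le (Real.iSup_nonneg fun _ => abs_nonneg _)
    fun x hx => (dist_l2Graph_self f g x).trans_le (le_ciSup hbdd ⟨x, hx⟩)

lemma iSup_div_le_hausdorffDist_l2Graph (hK : IsCompact K) (hf : ContinuousOn f K)
    (hg : ∀ x ∈ K, ∀ y ∈ K, dist (g x) (g y) ≤ β * dist x y) :
    (⨆ z : K, |f z - g z|) / √(1 + β ^ 2) ≤ hausdorffDist (l2Graph f '' K) (l2Graph g '' K) := by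
  rw [div_le_iff₀' (by positivity)]
  refine Real.iSup_le (fun z => ?_) (mul_nonneg (Real.sqrt_nonneg _) hausdorffDist_nonneg)
  have hfin : hausdorffEDist (l2Graph f '' K) (l2Graph g '' K) ≠ ⊤ :=
    hausdorffEDist_ne_top_of_nonempty_of_bounded ⟨_, z, z.2, rfl⟩ ⟨_, z, z.2, rfl⟩
      (hK.image_l2Graph hf).isBounded
      (hK.image_l2Graph (continuousOn_of_dist_le_mul hg)).isBounded
  calc |f z - g z| ≤ √(1 + β ^ 2) * infDist (l2Graph f z) (l2Graph g '' K) :=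
        abs_sub_le_mul_infDist_l2Graph hg z.2
    _ ≤ √(1 + β ^ 2) * hausdorffDist (l2Graph f '' K) (l2Graph g '' K) := by
        gcongr
        exact infDist_le_hausdorffDist_of_mem (mem_image_of_mem _ z.2) hfin

end l2Graph

theorem stmt9_general (N : ℕ) (β : ℝ)
    (K : Set (EuclideanSpace ℝ (Fin (N - 1)))) (hK : IsCompact K)
    (f g : EuclideanSpace ℝ (Fin (N - 1)) → ℝ)
    (hf : ∀ x ∈ K, ∀ y ∈ K, |f x - f y| ≤ β * ‖x - y‖)
    (hg : ∀ x ∈ K, ∀ y ∈ K, |g x - g y| ≤ β * ‖x - y‖) :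
    (⨆ z : K, |f z - g z|) / Real.sqrt (1 + β ^ 2) ≤
      Metric.hausdorffDist
        ((fun z => (WithLp.equiv 2 (EuclideanSpace ℝ (Fin (N - 1)) × ℝ)).symm (z, f z)) '' K)
        ((fun z => (WithLp.equiv 2 (EuclideanSpace ℝ (Fin (N - 1)) × ℝ)).symm (z, g z)) '' K) ∧
    Metric.hausdorffDist
        ((fun z => (WithLp.equiv 2 (EuclideanSpace ℝ (Fin (N - 1)) × ℝ)).symm (z, f z)) '' K)
        ((fun z => (WithLp.equiv 2 (EuclideanSpace ℝ (Fin (N - 1)) × ℝ)).symm (z, g z)) '' K) ≤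
      ⨆ z : K, |f z - g z| := by
  have hf' : ∀ x ∈ K, ∀ y ∈ K, dist (f x) (f y) ≤ β * dist x y :=
    fun x hx y hy => by rw [Real.dist_eq, dist_eq_norm]; exact hf x hx y hy
  have hg' : ∀ x ∈ K, ∀ y ∈ K, dist (g x) (g y) ≤ β * dist x y :=
    fun x hx y hy => by rw [Real.dist_eq, dist_eq_norm]; exact hg x hx y hy
  exact ⟨iSup_div_le_hausdorffDist_l2Graph hK (continuousOn_of_dist_le_mul hf') hg',
    hausdorffDist_l2Graph_le_iSup hK (continuousOn_of_dist_le_mul hf')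
      (continuousOn_of_dist_le_mul hg')⟩

/-- Comparison between the sup distance of two Lipschitz functions on a
nonempty compact set `K ⊆ ℝ^{N-1}` and the Hausdorff distance of their graphs in
`ℝ^N ≅ ℝ^{N-1} × ℝ` (with the Euclidean, i.e. `ℓ²`, product norm):
`(sup_K |f−g|)/√(1+β²) ≤ d_H(Γ_f, Γ_g) ≤ sup_K |f−g|`. -/
theorem stmt9 (N : ℕ) (hN : 2 ≤ N) (β : ℝ) (hβ : 0 < β)
    (K : Set (EuclideanSpace ℝ (Fin (N - 1)))) (hK : IsCompact K) (hKne : K.Nonempty)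
    (f g : EuclideanSpace ℝ (Fin (N - 1)) → ℝ)
    (hf : ∀ x ∈ K, ∀ y ∈ K, |f x - f y| ≤ β * ‖x - y‖)
    (hg : ∀ x ∈ K, ∀ y ∈ K, |g x - g y| ≤ β * ‖x - y‖) :
    (⨆ z : K, |f z - g z|) / Real.sqrt (1 + β ^ 2) ≤
      Metric.hausdorffDist
        ((fun z => (WithLp.equiv 2 (EuclideanSpace ℝ (Fin (N - 1)) × ℝ)).symm (z, f z)) '' K)
        ((fun z => (WithLp.equiv 2 (EuclideanSpace ℝ (Fin (N - 1)) × ℝ)).symm (z, g z)) '' K) ∧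
    Metric.hausdorffDist
        ((fun z => (WithLp.equiv 2 (EuclideanSpace ℝ (Fin (N - 1)) × ℝ)).symm (z, f z)) '' K)
        ((fun z => (WithLp.equiv 2 (EuclideanSpace ℝ (Fin (N - 1)) × ℝ)).symm (z, g z)) '' K) ≤
      ⨆ z : K, |f z - g z| :=
  stmt9_general N β K hK f g hf hg
end
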